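/- arXiv:0911.0286 — 4 statements merged into one kernel-verified Lean document; each statement's English description precedes it below -/
import Mathlib

section
/- Let F(x) ∈ 𝓞[x] be a monic irreducible polynomial of degree n with root θ ∈ K̄. The depth of F is zero (that is, the minimum of deg_K η over all η ∈ K̄ with v(θ − η) > 0 equals n) if and only if the reduction of F(x) modulo 𝔪 is irreducible in (𝓞/𝔪)[x]. -/
/-!
Let `O` be the valuation ring of `K̄`. A root `θ` of `F` lies in `O` and reduces to a root `θ̄` of
`F̄` in the residue field of `O`, and `v(θ - η) > 0` says exactly that `η ∈ O` and `η̄ = θ̄`.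
If `F̄ = f g` with both factors of positive degree, lift the factor vanishing at `θ̄` to a monic
`P ∈ 𝓞[x]`: since `v(P(θ))` is the sum of the `v(θ - ρ)` over the roots `ρ` of `P`, one of them
satisfies `v(θ - ρ) > 0` although `deg_K ρ < n`. Conversely, if `v(θ - η) > 0`, the conjugates of
`η` lie in `O` because `v` is Galois invariant, so the minimal polynomial `G` of `η` lies in `𝓞[x]`;
then `Ḡ(θ̄) = 0`, and if `F̄` is irreducible it is the minimal polynomial of `θ̄`, hence it
divides `Ḡ`.
-/

open Polynomial

noncomputable section

/-- A local field `K` of characteristic zero, presented through the canonical extension `v`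
of its normalized discrete valuation (additively written, `v(K*) = ℤ`) to a fixed algebraic
closure of `K`.  The axioms state that `v` is an additive valuation on the algebraic closure,
that its restriction to `K` is a surjective discrete valuation onto `ℤ` (plus `⊤` at `0`),
that it is invariant under `K`-automorphisms (a property of the canonical extension), that
`K` is complete and that its residue field is finite. -/
structure OkutsuSetup (K : Type) [Field K] [CharZero K] : Type where
  v : AlgebraicClosure K → WithTop ℚ
  v_eq_top_iff : ∀ x, v x = ⊤ ↔ x = 0
  v_mul : ∀ x y, v (x * y) = v x + v y
  v_min_le_add : ∀ x y, min (v x) (v y) ≤ v (x + y)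
  v_neg : ∀ x, v (-x) = v x
  v_one : v 1 = 0
  v_base_int : ∀ x : K, x ≠ 0 →
    ∃ k : ℤ, v (algebraMap K (AlgebraicClosure K) x) = ((k : ℚ) : WithTop ℚ)
  v_base_one : ∃ x : K, v (algebraMap K (AlgebraicClosure K) x) = ((1 : ℚ) : WithTop ℚ)
  v_aut_invariant : ∀ (M : IntermediateField K (AlgebraicClosure K)) (σ : ↥M ≃ₐ[K] ↥M)
    (x : ↥M), v ((σ x : ↥M) : AlgebraicClosure K) = v ((x : ↥M) : AlgebraicClosure K)
  complete : ∀ a : ℕ → K,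
    (∀ N : ℚ, ∃ M : ℕ, ∀ p q : ℕ, M ≤ p → M ≤ q →
      ((N : ℚ) : WithTop ℚ) < v (algebraMap K (AlgebraicClosure K) (a p - a q))) →
    ∃ b : K, ∀ N : ℚ, ∃ M : ℕ, ∀ p : ℕ, M ≤ p →
      ((N : ℚ) : WithTop ℚ) < v (algebraMap K (AlgebraicClosure K) (a p - b))
  finite_residue : ∃ T : Finset K, ∀ x : K,
    0 ≤ v (algebraMap K (AlgebraicClosure K) x) →
    ∃ y ∈ T, 0 < v (algebraMap K (AlgebraicClosure K) (x - y))

namespace OkutsuSetup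

variable {K : Type} [Field K] [CharZero K]

/-- The valuation of `K` itself. -/
def vK (S : OkutsuSetup K) (x : K) : WithTop ℚ :=
  S.v (algebraMap K (AlgebraicClosure K) x)

/-- The ring of integers `𝓞` of `K`. -/
def integers (S : OkutsuSetup K) : Subring K where
  carrier := {x : K | 0 ≤ S.vK x}
  zero_mem' := by
    show (0 : WithTop ℚ) ≤ S.vK 0
    unfold vK
    rw [map_zero, (S.v_eq_top_iff 0).mpr rfl]
    exact le_top
  one_mem' := by
    show (0 : WithTop ℚ) ≤ S.vK 1
    unfold vK
    rw [map_one, S.v_one]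
  add_mem' := by
    intro a b ha hb
    show (0 : WithTop ℚ) ≤ S.vK (a + b)
    unfold vK
    rw [map_add]
    exact le_trans (le_min ha hb) (S.v_min_le_add _ _)
  mul_mem' := by
    intro a b ha hb
    show (0 : WithTop ℚ) ≤ S.vK (a * b)
    unfold vK
    rw [map_mul, S.v_mul]
    exact add_nonneg ha hb
  neg_mem' := by
    intro a ha
    show (0 : WithTop ℚ) ≤ S.vK (-a)
    unfold vK
    rw [map_neg, S.v_neg]
    exact ha

/-- The maximal ideal `𝔪` of the ring of integers of `K`. -/
def maximalIdeal (S : OkutsuSetup K) : Ideal S.integers where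
  carrier := {x : S.integers | 0 < S.vK (x : K)}
  zero_mem' := by
    show (0 : WithTop ℚ) < S.vK ((0 : S.integers) : K)
    have h0 : ((0 : S.integers) : K) = (0 : K) := rfl
    rw [h0]
    unfold vK
    rw [map_zero, (S.v_eq_top_iff 0).mpr rfl]
    exact WithTop.coe_lt_top 0
  add_mem' := by
    intro a b ha hb
    show (0 : WithTop ℚ) < S.vK ((a : K) + (b : K))
    refine lt_of_lt_of_le (lt_min ha hb) ?_
    unfold vK
    rw [map_add]
    exact S.v_min_le_add _ _
  smul_mem' := by
    intro c x hx
    show (0 : WithTop ℚ) < S.vK ((c : K) * (x : K))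
    unfold vK
    rw [map_mul, S.v_mul]
    calc (0 : WithTop ℚ) < S.v (algebraMap K (AlgebraicClosure K) (x : K)) := hx
    _ ≤ _ + _ := le_add_of_nonneg_left c.2

/-- The residue field `𝓞/𝔪` of `K`. -/
abbrev Residue (S : OkutsuSetup K) : Type :=
  S.integers ⧸ S.maximalIdeal

/-- The residue characteristic of `K`. -/
def resChar (S : OkutsuSetup K) : ℕ :=
  ringChar S.Residue

/-- Reduction of a polynomial with integer coefficients modulo `𝔪`. -/
def reduce (S : OkutsuSetup K) (F : Polynomial S.integers) : Polynomial S.Residue :=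
  F.map (Ideal.Quotient.mk S.maximalIdeal)

/-- Evaluation of a polynomial with coefficients in `𝓞` at a point of the algebraic
closure of `K`. -/
def evalK (S : OkutsuSetup K) (F : Polynomial S.integers) (θ : AlgebraicClosure K) :
    AlgebraicClosure K :=
  Polynomial.aeval θ (F.map S.integers.subtype)

/-- `v(g)` for a polynomial `g`: the minimum of the valuations of its coefficients. -/
def vPoly (S : OkutsuSetup K) (g : Polynomial S.integers) : WithTop ℚ :=
  (Finset.range (g.natDegree + 1)).inf fun i => S.vK ((g.coeff i : K))

/-- The ramification index `e(E/K)` of a finite subextension `E` of `K̄/K`: the least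
positive integer `e` such that all values of `v` on `E*` lie in `(1/e)ℤ`. -/
def ramIdx (S : OkutsuSetup K) (E : IntermediateField K (AlgebraicClosure K)) : ℕ :=
  sInf {e : ℕ | 0 < e ∧ ∀ x ∈ E, x ≠ (0 : AlgebraicClosure K) →
    ∃ k : ℤ, S.v x = (((k : ℚ) / (e : ℚ) : ℚ) : WithTop ℚ)}

/-- The residual degree `f(E/K)` of a finite subextension `E` of `K̄/K`; since `K` is a
complete discretely valued field, `[E : K] = e(E/K)·f(E/K)`. -/
def resDeg (S : OkutsuSetup K) (E : IntermediateField K (AlgebraicClosure K)) : ℕ :=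
  Module.finrank K E / S.ramIdx E

/-- A subextension `E/K` is tamely ramified when its ramification index is prime to the
residue characteristic of `K`. -/
def IsTame (S : OkutsuSetup K) (E : IntermediateField K (AlgebraicClosure K)) : Prop :=
  Nat.Coprime (S.ramIdx E) S.resChar

/-- The Okutsu invariants `m_0 = 1 ≤ m_1 < ⋯ < m_r < m_{r+1} = n` and
`μ_0 = 0 < μ_1 < ⋯ < μ_r < μ_{r+1} = ∞` of a monic irreducible polynomial of degree `n`
with root `θ`:  `m i` is the least `[K(η):K]` over `η` with `v(θ-η) > μ (i-1)`, and
`μ i` is the greatest value of `v(θ-η)` over `η` with `[K(η):K] = m i`.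
`r` is the depth: the number of indices `i ≥ 1` with `m i < n`. -/
structure OkutsuData (S : OkutsuSetup K) (θ : AlgebraicClosure K) (n : ℕ) : Type where
  r : ℕ
  m : ℕ → ℕ
  μ : ℕ → WithTop ℚ
  m_zero : m 0 = 1
  mu_zero : μ 0 = 0
  m_isLeast : ∀ i, 1 ≤ i → i ≤ r + 1 →
    IsLeast {d : ℕ | ∃ η : AlgebraicClosure K,
      (minpoly K η).natDegree = d ∧ μ (i - 1) < S.v (θ - η)} (m i)
  mu_isGreatest : ∀ i, 1 ≤ i → i ≤ r + 1 →
    IsGreatest {c : WithTop ℚ | ∃ η : AlgebraicClosure K,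
      (minpoly K η).natDegree = m i ∧ S.v (θ - η) = c} (μ i)
  m_lt_n : ∀ i, 1 ≤ i → i ≤ r → m i < n
  m_last : m (r + 1) = n

/-- `[F_1, …, F_r]` is an Okutsu frame of the monic irreducible polynomial with root `θ`
and Okutsu invariants `D`: for each `1 ≤ i ≤ r`, `F_i` is the minimal polynomial of some
`α_i ∈ K̄` with `[K(α_i):K] = m_i` and `v(θ - α_i) = μ_i`. -/
def IsFrame (S : OkutsuSetup K) {θ : AlgebraicClosure K} {n : ℕ} (D : OkutsuData S θ n)
    (Fr : ℕ → Polynomial S.integers) : Prop :=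
  ∀ i, 1 ≤ i → i ≤ D.r → ∃ α : AlgebraicClosure K,
    (minpoly K α).natDegree = D.m i ∧ S.v (θ - α) = D.μ i ∧
      (Fr i).map S.integers.subtype = minpoly K α

/-- `φ` is a Montes approximation to the monic irreducible polynomial `F`:  a monic
irreducible polynomial of the same degree `n` having a root `α` with `v(θ - α) > μ_r`,
where `θ` is a root of `F`. -/
def IsMontesApprox (S : OkutsuSetup K) (F φ : Polynomial S.integers) : Prop :=
  φ.Monic ∧ Irreducible (φ.map S.integers.subtype) ∧ φ.natDegree = F.natDegree ∧
    ∃ θ : AlgebraicClosure K, S.evalK F θ = 0 ∧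
      ∃ D : OkutsuData S θ F.natDegree, ∃ α : AlgebraicClosure K,
        S.evalK φ α = 0 ∧ D.μ D.r < S.v (θ - α)

end OkutsuSetup

namespace OkutsuSetup

open IsLocalRing

variable {K : Type} [Field K] [CharZero K] (S : OkutsuSetup K)

local notation "K̄" => AlgebraicClosure K

def val : AddValuation K̄ (WithTop ℚ) :=
  AddValuation.of S.v ((S.v_eq_top_iff 0).2 rfl) S.v_one S.v_min_le_add S.v_mul

def valuationSubring : ValuationSubring K̄ :=
  Valuation.valuationSubring (Γ := Multiplicative (WithTop ℚ)ᵒᵈ) (AddValuation.toValuation S.val)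

lemma mem_valuationSubring_iff {x : K̄} : x ∈ S.valuationSubring ↔ 0 ≤ S.v x := Iff.rfl

lemma residue_eq_zero_iff_pos (x : S.valuationSubring) :
    residue S.valuationSubring x = 0 ↔ 0 < S.v x := by
  rw [residue_eq_zero_iff]
  exact Valuation.mem_maximalIdeal_iff (v := AddValuation.toValuation S.val)

lemma isUnit_of_notMem_maximalIdeal {x : S.integers} (hx : x ∉ S.maximalIdeal) : IsUnit x := by
  have hv : S.vK x = 0 := le_antisymm (not_lt.1 hx) x.2
  have hx0 : (x : K) ≠ 0 := by
    rintro h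
    simp [vK, h, (S.v_eq_top_iff 0).2 rfl] at hv
  have hinv : 0 ≤ S.vK (x : K)⁻¹ := by
    have := S.v_mul (algebraMap K K̄ x) (algebraMap K K̄ (x : K)⁻¹)
    rw [← map_mul, mul_inv_cancel₀ hx0, map_one, S.v_one] at this
    rw [show S.v (algebraMap K K̄ x) = 0 from hv, zero_add] at this
    exact this.le
  exact .of_mul_eq_one ⟨_, hinv⟩ (Subtype.ext (mul_inv_cancel₀ hx0))

instance : S.maximalIdeal.IsMaximal := by
  refine Ideal.isMaximal_iff.2 ⟨fun h => ?_, fun J x _ hx hxJ => ?_⟩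
  · simp [maximalIdeal, vK, S.v_one] at h
  · obtain ⟨y, hy⟩ := isUnit_iff_exists_inv.1 (S.isUnit_of_notMem_maximalIdeal hx)
    exact hy ▸ J.mul_mem_right y hxJ

instance : Field S.Residue := Ideal.Quotient.field S.maximalIdeal

lemma monic_reduce {F : Polynomial S.integers} (hF : F.Monic) : (S.reduce F).Monic := hF.map _

lemma natDegree_reduce {F : Polynomial S.integers} (hF : F.Monic) :
    (S.reduce F).natDegree = F.natDegree :=
  hF.natDegree_map _

def toValuationSubring : S.integers →+* S.valuationSubring :=
  ((algebraMap K K̄).comp S.integers.subtype).codRestrict _ fun c => c.2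

lemma evalK_eq_eval₂ (A : Polynomial S.integers) (x : K̄) :
    S.evalK A x = (A.map S.toValuationSubring).eval₂ (algebraMap S.valuationSubring K̄) x := by
  rw [evalK, aeval_def, eval₂_map, eval₂_map]
  rfl

lemma mem_valuationSubring_of_evalK_eq_zero {A : Polynomial S.integers} (hA : A.Monic) {x : K̄}
    (hx : S.evalK A x = 0) : x ∈ S.valuationSubring :=
  (Valuation.valuationSubring.integers _).isIntegral_iff_v_le_one.1
    ⟨A.map S.toValuationSubring, hA.map _, (S.evalK_eq_eval₂ A x).symm.trans hx⟩

instance : Algebra S.Residue (ResidueField S.valuationSubring) :=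
  (Ideal.Quotient.lift S.maximalIdeal ((residue S.valuationSubring).comp S.toValuationSubring)
    fun _ hc => (S.residue_eq_zero_iff_pos _).2 hc).toAlgebra

lemma aeval_residue_reduce_eq_zero_iff (A : Polynomial S.integers) (x : S.valuationSubring) :
    aeval (residue S.valuationSubring x) (S.reduce A) = 0 ↔ 0 < S.v (S.evalK A x) := by
  have hres : aeval (residue S.valuationSubring x) (S.reduce A) =
      residue S.valuationSubring ((A.map S.toValuationSubring).eval x) := by
    rw [reduce, aeval_def, eval₂_map, eval_map, hom_eval₂]
    rfl
  have hcoe : (((A.map S.toValuationSubring).eval x : S.valuationSubring) : K̄) = S.evalK A x := by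
    rw [S.evalK_eq_eval₂, eval, ← SubringClass.coe_subtype, hom_eval₂]
    rfl
  rw [hres, residue_eq_zero_iff_pos, hcoe]

lemma aeval_residue_reduce_eq_zero_of_evalK_eq_zero (A : Polynomial S.integers)
    (x : S.valuationSubring) (hx : S.evalK A x = 0) :
    aeval (residue S.valuationSubring x) (S.reduce A) = 0 := by
  rw [aeval_residue_reduce_eq_zero_iff, hx, (S.v_eq_top_iff 0).2 rfl]
  exact WithTop.coe_lt_top 0

lemma v_multiset_prod (s : Multiset K̄) : S.v s.prod = (s.map S.v).sum := by
  induction s using Multiset.induction with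
  | empty => simp [S.v_one]
  | cons a s ih => rw [Multiset.prod_cons, S.v_mul, ih, Multiset.map_cons, Multiset.sum_cons]

lemma exists_root_near_of_v_evalK_pos {R : Polynomial S.integers} (hR : R.Monic) {x : K̄}
    (h : 0 < S.v (S.evalK R x)) : ∃ ρ : K̄, S.evalK R ρ = 0 ∧ 0 < S.v (x - ρ) := by
  set P := (R.map S.integers.subtype).map (algebraMap K K̄)
  have hP : S.evalK R x = (P.roots.map (x - ·)).prod := by
    rw [evalK, aeval_def, ← eval_map, (IsAlgClosed.splits P).eval_eq_prod_roots,
      ((hR.map _).map _).leadingCoeff, one_mul]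
  rw [hP, v_multiset_prod, Multiset.map_map] at h
  by_contra! hfar
  refine h.not_ge ((Multiset.sum_le_card_nsmul _ 0 fun c hc => ?_).trans_eq (nsmul_zero _))
  obtain ⟨ρ, hρ, rfl⟩ := Multiset.mem_map.1 hc
  refine hfar ρ ?_
  rw [evalK, aeval_def, ← eval_map]
  exact (mem_roots'.1 hρ).2

lemma exists_near_of_aeval_residue_eq_zero {f : Polynomial S.Residue} (hf : f.Monic)
    (x : S.valuationSubring) (hx : aeval (residue S.valuationSubring x) f = 0) :
    ∃ ρ : K̄, (minpoly K ρ).natDegree ≤ f.natDegree ∧ 0 < S.v (x - ρ) := by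
  obtain ⟨R, hRf, hRdeg, hRm⟩ := lifts_and_natDegree_eq_and_monic
    ((mem_lifts f).2 (map_surjective _ Ideal.Quotient.mk_surjective f)) hf
  obtain ⟨ρ, hρ, hnear⟩ := S.exists_root_near_of_v_evalK_pos hRm
    ((S.aeval_residue_reduce_eq_zero_iff R x).1 (by rwa [reduce, hRf]))
  refine ⟨ρ, ?_, hnear⟩
  rw [← hRdeg, ← hRm.natDegree_map S.integers.subtype]
  exact natDegree_le_of_dvd (minpoly.dvd K ρ hρ) (hRm.map _).ne_zero

lemma v_algEquiv (σ : K̄ ≃ₐ[K] K̄) (x : K̄) : S.v (σ x) = S.v x :=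
  S.v_aut_invariant ⊤ (IntermediateField.topEquiv.trans (σ.trans IntermediateField.topEquiv.symm))
    ⟨x, trivial⟩

lemma mem_valuationSubring_of_aeval_minpoly_eq_zero {η ρ : K̄} (hη : η ∈ S.valuationSubring)
    (hρ : aeval ρ (minpoly K η) = 0) : ρ ∈ S.valuationSubring := by
  obtain ⟨σ, rfl⟩ := minpoly.exists_algEquiv_of_root' (Algebra.IsAlgebraic.isAlgebraic η) hρ
  rw [mem_valuationSubring_iff, v_algEquiv]
  exact hη

lemma exists_monic_map_eq_minpoly {η : K̄} (hη : η ∈ S.valuationSubring) :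
    ∃ G : Polynomial S.integers, G.Monic ∧ G.map S.integers.subtype = minpoly K η := by
  have hmonic : (minpoly K η).Monic := minpoly.monic (Algebra.IsIntegral.isIntegral η)
  set P := (minpoly K η).map (algebraMap K K̄)
  have hP : P ∈ lifts (algebraMap S.valuationSubring K̄) := by
    rw [(IsAlgClosed.splits P).eq_prod_roots_of_monic (hmonic.map _)]
    refine Subsemiring.multiset_prod_mem _ _ fun q hq => ?_
    obtain ⟨ρ, hρ, rfl⟩ := Multiset.mem_map.1 hq
    have hρO : ρ ∈ S.valuationSubring := S.mem_valuationSubring_of_aeval_minpoly_eq_zero hη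
      (by rw [aeval_def, ← eval_map]; exact (mem_roots'.1 hρ).2)
    exact (mem_lifts _).2 ⟨X - C ⟨ρ, hρO⟩, by simp⟩
  have hcoeff : ((minpoly K η).coeffs : Set K) ⊆ S.integers := by
    intro c hc
    obtain ⟨i, -, rfl⟩ := mem_coeffs_iff.1 hc
    obtain ⟨a, ha⟩ := (lifts_iff_coeff_lifts P).1 hP i
    change 0 ≤ S.v (algebraMap K K̄ _)
    rw [← coeff_map, ← ha]
    exact a.2
  refine ⟨(minpoly K η).toSubring _ hcoeff, ?_, map_toSubring _ _ hcoeff⟩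
  exact monic_of_injective Subtype.val_injective (by rwa [map_toSubring])

lemma irreducible_reduce_of_forall_natDegree_le {F : Polynomial S.integers} (hF : F.Monic)
    (θ : S.valuationSubring) (hθ : aeval (residue S.valuationSubring θ) (S.reduce F) = 0)
    (h : ∀ η : K̄, 0 < S.v (θ - η) → F.natDegree ≤ (minpoly K η).natDegree) :
    Irreducible (S.reduce F) := by
  refine (S.monic_reduce hF).irreducible_iff_natDegree.2 ⟨fun h1 => ?_, fun f g hf hg hfg => ?_⟩
  · rw [h1, map_one] at hθ
    exact one_ne_zero hθ
  have hdeg : f.natDegree + g.natDegree = F.natDegree := by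
    rw [← hf.natDegree_mul hg, hfg, S.natDegree_reduce hF]
  rw [← hfg, map_mul, mul_eq_zero] at hθ
  by_contra! hpos
  rcases hθ with hθ | hθ
  · obtain ⟨ρ, hρ, hnear⟩ := S.exists_near_of_aeval_residue_eq_zero hf θ hθ
    have := h ρ hnear
    omega
  · obtain ⟨ρ, hρ, hnear⟩ := S.exists_near_of_aeval_residue_eq_zero hg θ hθ
    have := h ρ hnear
    omega

lemma natDegree_le_of_irreducible_reduce {F : Polynomial S.integers} (hF : F.Monic)
    (θ : S.valuationSubring) (hθ : aeval (residue S.valuationSubring θ) (S.reduce F) = 0)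
    (hirr : Irreducible (S.reduce F)) {η : K̄} (hη : 0 < S.v (θ - η)) :
    F.natDegree ≤ (minpoly K η).natDegree := by
  have hηO : η ∈ S.valuationSubring := by
    simpa using sub_mem θ.2 (S.mem_valuationSubring_iff.2 hη.le)
  obtain ⟨G, hGm, hG⟩ := S.exists_monic_map_eq_minpoly hηO
  have hres : residue S.valuationSubring θ = residue S.valuationSubring ⟨η, hηO⟩ := by
    rw [← sub_eq_zero, ← map_sub, residue_eq_zero_iff_pos]
    exact hη
  have hGθ : aeval (residue S.valuationSubring θ) (S.reduce G) = 0 := by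
    refine hres ▸ S.aeval_residue_reduce_eq_zero_of_evalK_eq_zero G _ ?_
    rw [evalK, hG]
    exact minpoly.aeval K η
  have hdvd : S.reduce F ∣ S.reduce G :=
    minpoly.eq_of_irreducible_of_monic hirr hθ (S.monic_reduce hF) ▸ minpoly.dvd _ _ hGθ
  calc F.natDegree = (S.reduce F).natDegree := (S.natDegree_reduce hF).symm
    _ ≤ (S.reduce G).natDegree := natDegree_le_of_dvd hdvd (S.monic_reduce hGm).ne_zero
    _ = (minpoly K η).natDegree := by rw [S.natDegree_reduce hGm, ← hG, hGm.natDegree_map]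

end OkutsuSetup

open OkutsuSetup in
/-- Let `F ∈ 𝓞[x]` be monic irreducible of degree `n` with root `θ ∈ K̄`.
The depth of `F` is zero — i.e. the minimum of `[K(η):K]` over all `η ∈ K̄` with
`v(θ - η) > 0` equals `n` — iff the reduction of `F` modulo `𝔪` is irreducible in
`(𝓞/𝔪)[x]`. -/
theorem okutsu_stmt_1 {K : Type} [Field K] [CharZero K] (S : OkutsuSetup K)
    (F : Polynomial S.integers) (hFmonic : F.Monic)
    (hFirr : Irreducible (F.map S.integers.subtype))
    (n : ℕ) (hFdeg : F.natDegree = n)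
    (θ : AlgebraicClosure K) (hθ : S.evalK F θ = 0) :
    IsLeast {d : ℕ | ∃ η : AlgebraicClosure K,
        (minpoly K η).natDegree = d ∧ 0 < S.v (θ - η)} n ↔
      Irreducible (S.reduce F) := by
  subst hFdeg
  have hθO := S.mem_valuationSubring_of_evalK_eq_zero hFmonic hθ
  have hθres := S.aeval_residue_reduce_eq_zero_of_evalK_eq_zero F ⟨θ, hθO⟩ hθ
  constructor
  · rintro ⟨-, hle⟩
    exact S.irreducible_reduce_of_forall_natDegree_le hFmonic ⟨θ, hθO⟩ hθres
      fun η hη => hle ⟨η, rfl, hη⟩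
  · intro hirr
    refine ⟨⟨θ, ?_, ?_⟩, ?_⟩
    · rw [← minpoly.eq_of_irreducible_of_monic hFirr hθ (hFmonic.map _), hFmonic.natDegree_map]
    · rw [sub_self, (S.v_eq_top_iff 0).2 rfl]
      exact WithTop.coe_lt_top 0
    · rintro d ⟨η, rfl, hη⟩
      exact S.natDegree_le_of_irreducible_reduce hFmonic ⟨θ, hθO⟩ hθres hirr hη
end
end

section
/- Let F(x) ∈ 𝓞[x] be a monic irreducible polynomial with root θ ∈ K̄, of depth r, with Okutsu frame [F_1, …, F_r] and associated invariants m_i, μ_i. Fix an index 1 ≤ i ≤ r+1, let α ∈ K̄ be an algebraic integer satisfying deg_K α = m_i and v(θ − α) > μ_{i−1}, and let G(x) be the minimal polynomial of α over K. Then [F_1, …, F_{i−1}] is an Okutsu frame of G(x). -/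
/-!
For every `j < i` we have `μ_j ≤ μ_{i-1} < v(θ - α)`. For any level `c < v(θ - α)` the
ultrametric inequality gives `c < v(α - η) ↔ c < v(θ - η)`, and `v(α - η) = v(θ - η)`
whenever `v(θ - η) < v(θ - α)`. Hence the extremal problems defining `m_j, μ_j` for `j < i`
have the same solutions for `α` as for `θ`, the same `α_j` realise them, and at level `i` the
degree `m_i` is attained by `α` itself with `v(α - α) = ∞`, so `α` has depth `i - 1`.
-/

open Polynomial

noncomputable section

namespace OkutsuSetup

variable {K : Type} [Field K] [CharZero K] (S : OkutsuSetup K)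

theorem v_sub_comm (a b : AlgebraicClosure K) : S.v (a - b) = S.v (b - a) := by
  rw [← neg_sub, S.v_neg]

theorem v_sub_self (a : AlgebraicClosure K) : S.v (a - a) = ⊤ :=
  (S.v_eq_top_iff _).mpr (sub_self a)

theorem min_le_v_sub (a b c : AlgebraicClosure K) :
    min (S.v (a - b)) (S.v (b - c)) ≤ S.v (a - c) := by
  simpa only [sub_add_sub_cancel] using S.v_min_le_add (a - b) (b - c)

variable {S}

theorem lt_v_sub_trans {c : WithTop ℚ} {a b d : AlgebraicClosure K}
    (hab : c < S.v (a - b)) (hbd : c < S.v (b - d)) : c < S.v (a - d) :=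
  (lt_min hab hbd).trans_le (S.min_le_v_sub a b d)

theorem lt_v_sub_iff_of_lt {c : WithTop ℚ} {θ α η : AlgebraicClosure K}
    (h : c < S.v (θ - α)) : c < S.v (α - η) ↔ c < S.v (θ - η) :=
  ⟨lt_v_sub_trans h, lt_v_sub_trans (S.v_sub_comm α θ ▸ h)⟩

theorem v_sub_eq_of_lt {θ α η : AlgebraicClosure K} (h : S.v (θ - η) < S.v (θ - α)) :
    S.v (α - η) = S.v (θ - η) := by
  refine le_antisymm (not_lt.mp fun hlt => (lt_v_sub_trans h hlt).false) ?_
  calc S.v (θ - η) = min (S.v (α - θ)) (S.v (θ - η)) := by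
        rw [S.v_sub_comm α θ, min_eq_right h.le]
    _ ≤ S.v (α - η) := S.min_le_v_sub α θ η

end OkutsuSetup

namespace OkutsuSetup.OkutsuData

variable {K : Type} [Field K] [CharZero K] {S : OkutsuSetup K} {θ : AlgebraicClosure K}
  {n : ℕ} (D : OkutsuData S θ n)

theorem mu_pred_lt {j : ℕ} (hj1 : 1 ≤ j) (hj2 : j ≤ D.r + 1) : D.μ (j - 1) < D.μ j := by
  obtain ⟨⟨η, hdeg, hv⟩, -⟩ := D.m_isLeast j hj1 hj2
  exact hv.trans_le ((D.mu_isGreatest j hj1 hj2).2 ⟨η, hdeg, rfl⟩)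

theorem mu_le_mu {a b : ℕ} (hab : a ≤ b) (hb : b ≤ D.r + 1) : D.μ a ≤ D.μ b := by
  induction b, hab using Nat.le_induction with
  | base => rfl
  | succ k _ ih =>
    exact (ih (by omega)).trans (D.mu_pred_lt (j := k + 1) (by omega) hb).le

theorem m_lt_m_succ {j : ℕ} (hj1 : 1 ≤ j) (hj2 : j ≤ D.r) : D.m j < D.m (j + 1) := by
  obtain ⟨⟨η, hdeg, hv⟩, -⟩ := D.m_isLeast (j + 1) (by omega) (by omega)
  rw [Nat.add_sub_cancel] at hv
  have hle : D.m j ≤ D.m (j + 1) :=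
    (D.m_isLeast j hj1 (by omega)).2 ⟨η, hdeg, (D.mu_pred_lt hj1 (by omega)).trans hv⟩
  refine hle.lt_of_ne fun heq => hv.not_ge ?_
  exact (D.mu_isGreatest j hj1 (by omega)).2 ⟨η, hdeg.trans heq.symm, rfl⟩

theorem m_lt_m {a b : ℕ} (ha : 1 ≤ a) (hab : a < b) (hb : b ≤ D.r + 1) : D.m a < D.m b := by
  induction b, hab using Nat.le_induction with
  | base => exact D.m_lt_m_succ ha (by omega)
  | succ k _ ih => exact (ih (by omega)).trans (D.m_lt_m_succ (by omega) (by omega))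

variable {α : AlgebraicClosure K}

theorem mu_lt_of_le_pred {i j : ℕ} (hj : j ≤ i - 1) (hi : i ≤ D.r + 1)
    (hαv : D.μ (i - 1) < S.v (θ - α)) : D.μ j < S.v (θ - α) :=
  (D.mu_le_mu hj (by omega)).trans_lt hαv

theorem isLeast_m_of_lt {j : ℕ} (hj1 : 1 ≤ j) (hj2 : j ≤ D.r + 1)
    (hα : D.μ (j - 1) < S.v (θ - α)) :
    IsLeast {d : ℕ | ∃ η : AlgebraicClosure K,
      (minpoly K η).natDegree = d ∧ D.μ (j - 1) < S.v (α - η)} (D.m j) := by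
  simpa only [lt_v_sub_iff_of_lt hα] using D.m_isLeast j hj1 hj2

theorem isGreatest_mu_of_lt {j : ℕ} (hj1 : 1 ≤ j) (hj2 : j ≤ D.r + 1)
    (hα : D.μ j < S.v (θ - α)) :
    IsGreatest {c : WithTop ℚ | ∃ η : AlgebraicClosure K,
      (minpoly K η).natDegree = D.m j ∧ S.v (α - η) = c} (D.μ j) := by
  obtain ⟨⟨η, hdeg, hv⟩, hub⟩ := D.mu_isGreatest j hj1 hj2
  refine ⟨⟨η, hdeg, (v_sub_eq_of_lt (hv ▸ hα)).trans hv⟩, ?_⟩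
  rintro _ ⟨ζ, hζdeg, rfl⟩
  exact not_lt.mp fun hlt => ((lt_v_sub_iff_of_lt hα).mp hlt).not_ge (hub ⟨ζ, hζdeg, rfl⟩)

def truncate {i : ℕ} (hi1 : 1 ≤ i) (hi2 : i ≤ D.r + 1)
    (hαdeg : (minpoly K α).natDegree = D.m i) (hαv : D.μ (i - 1) < S.v (θ - α)) :
    OkutsuData S α (D.m i) where
  r := i - 1
  m := D.m
  μ j := if j < i then D.μ j else ⊤
  m_zero := D.m_zero
  mu_zero := by rw [if_pos (by omega), D.mu_zero]
  m_isLeast j hj1 hj2 := by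
    rw [if_pos (by omega)]
    exact D.isLeast_m_of_lt hj1 (by omega) (D.mu_lt_of_le_pred (by omega) hi2 hαv)
  mu_isGreatest j hj1 hj2 := by
    by_cases hji : j < i
    · rw [if_pos hji]
      exact D.isGreatest_mu_of_lt hj1 (by omega) (D.mu_lt_of_le_pred (by omega) hi2 hαv)
    · rw [if_neg hji, show j = i by omega]
      exact ⟨⟨α, hαdeg, S.v_sub_self α⟩, fun _ _ => le_top⟩
  m_lt_n j hj1 hj2 := D.m_lt_m hj1 (by omega) hi2
  m_last := by rw [Nat.sub_add_cancel hi1]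

theorem isFrame_truncate {i : ℕ} (hi1 : 1 ≤ i) (hi2 : i ≤ D.r + 1)
    (hαdeg : (minpoly K α).natDegree = D.m i) (hαv : D.μ (i - 1) < S.v (θ - α))
    {Fr : ℕ → Polynomial S.integers} (hFr : S.IsFrame D Fr) :
    S.IsFrame (D.truncate hi1 hi2 hαdeg hαv) Fr := by
  intro j hj1 hj2
  change j ≤ i - 1 at hj2
  obtain ⟨β, hdeg, hv, hFrj⟩ := hFr j hj1 (by omega)
  refine ⟨β, hdeg, ?_, hFrj⟩
  change S.v (α - β) = if j < i then D.μ j else ⊤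
  rw [if_pos (by omega), ← hv]
  exact v_sub_eq_of_lt (hv ▸ D.mu_lt_of_le_pred hj2 hi2 hαv)

end OkutsuSetup.OkutsuData

open OkutsuSetup in
theorem okutsu_stmt_3_general {K : Type} [Field K] [CharZero K] (S : OkutsuSetup K)
    (n : ℕ)
    (θ : AlgebraicClosure K)
    (D : OkutsuData S θ n)
    (Fr : ℕ → Polynomial S.integers) (hFr : S.IsFrame D Fr)
    (i : ℕ) (hi1 : 1 ≤ i) (hi2 : i ≤ D.r + 1)
    (α : AlgebraicClosure K)
    (hαdeg : (minpoly K α).natDegree = D.m i)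
    (hαv : D.μ (i - 1) < S.v (θ - α)) :
    ∃ D' : OkutsuData S α (D.m i), D'.r + 1 = i ∧ S.IsFrame D' Fr :=
  ⟨D.truncate hi1 hi2 hαdeg hαv, Nat.sub_add_cancel hi1, D.isFrame_truncate hi1 hi2 hαdeg hαv hFr⟩

open OkutsuSetup in
/-- Let `F ∈ 𝓞[x]` be monic irreducible with root `θ`, of depth `r`,
with Okutsu frame `[F_1, …, F_r]` and invariants `m_i`, `μ_i`.  Fix `1 ≤ i ≤ r + 1` and
let `α ∈ K̄` be an algebraic integer with `[K(α):K] = m_i` and `v(θ - α) > μ_{i-1}`, with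
minimal polynomial `G`.  Then `[F_1, …, F_{i-1}]` is an Okutsu frame of `G`. -/
theorem okutsu_stmt_3 {K : Type} [Field K] [CharZero K] (S : OkutsuSetup K)
    (F : Polynomial S.integers) (hFmonic : F.Monic)
    (hFirr : Irreducible (F.map S.integers.subtype))
    (n : ℕ) (hFdeg : F.natDegree = n)
    (θ : AlgebraicClosure K) (hθ : S.evalK F θ = 0)
    (D : OkutsuData S θ n)
    (Fr : ℕ → Polynomial S.integers) (hFr : S.IsFrame D Fr)
    (i : ℕ) (hi1 : 1 ≤ i) (hi2 : i ≤ D.r + 1)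
    (α : AlgebraicClosure K) (hαint : 0 ≤ S.v α)
    (hαdeg : (minpoly K α).natDegree = D.m i)
    (hαv : D.μ (i - 1) < S.v (θ - α)) :
    ∃ D' : OkutsuData S α (D.m i), D'.r + 1 = i ∧ S.IsFrame D' Fr :=
  okutsu_stmt_3_general S n θ D Fr hFr i hi1 hi2 α hαdeg hαv
end
end

section
/- Let F(x) ∈ 𝓞[x] be a monic irreducible polynomial with root θ ∈ K̄, of depth r, and let [F_1, …, F_r] be an Okutsu frame of F. Then, for every 1 ≤ i ≤ r, the chain [F_1, …, F_{i−1}] is an Okutsu frame of F_i(x); in particular, the depth of F_i equals i − 1. -/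
open Polynomial

noncomputable section

section Aux

variable {K : Type} [Field K] [CharZero K] (S : OkutsuSetup K)

lemma OkutsuSetup.v_zero : S.v 0 = ⊤ := (S.v_eq_top_iff 0).mpr rfl

lemma OkutsuSetup.v_add_eq {x y : AlgebraicClosure K} (h : S.v y < S.v x) :
    S.v (x + y) = S.v y := by
  have h1 : min (S.v x) (S.v y) ≤ S.v (x + y) := S.v_min_le_add x y
  rw [min_eq_right h.le] at h1
  have h2 : min (S.v (x + y)) (S.v (-x)) ≤ S.v ((x + y) + (-x)) := S.v_min_le_add _ _
  have hx : (x + y) + (-x) = y := by ring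
  rw [hx, S.v_neg] at h2
  refine le_antisymm ?_ h1
  by_contra hc
  push_neg at hc
  exact absurd h2 (not_le.mpr (lt_min hc h))

end Aux

open OkutsuSetup in
/-- Let `F ∈ 𝓞[x]` be monic irreducible with root `θ`, of depth `r`,
and let `[F_1, …, F_r]` be an Okutsu frame of `F`, with `F_i` the minimal polynomial of
`α_i`.  Then for every `1 ≤ i ≤ r` the chain `[F_1, …, F_{i-1}]` is an Okutsu frame of
`F_i`; in particular the depth of `F_i` equals `i - 1`. -/
theorem okutsu_stmt_4 {K : Type} [Field K] [CharZero K] (S : OkutsuSetup K)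
    (F : Polynomial S.integers) (hFmonic : F.Monic)
    (hFirr : Irreducible (F.map S.integers.subtype))
    (n : ℕ) (hFdeg : F.natDegree = n)
    (θ : AlgebraicClosure K) (hθ : S.evalK F θ = 0)
    (D : OkutsuData S θ n)
    (α : ℕ → AlgebraicClosure K) (Fr : ℕ → Polynomial S.integers)
    (hFr : ∀ i, 1 ≤ i → i ≤ D.r →
      (minpoly K (α i)).natDegree = D.m i ∧ S.v (θ - α i) = D.μ i ∧
        (Fr i).map S.integers.subtype = minpoly K (α i)) :
    ∀ i, 1 ≤ i → i ≤ D.r →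
      ∃ D' : OkutsuData S (α i) (D.m i), D'.r + 1 = i ∧ S.IsFrame D' Fr := by
  -- μ is strictly increasing on [0, r+1]
  have hmu_succ : ∀ j, j + 1 ≤ D.r + 1 → D.μ j < D.μ (j + 1) := by
    intro j hj
    obtain ⟨η, hdeg, hv⟩ := (D.m_isLeast (j + 1) (by omega) hj).1
    have hub := (D.mu_isGreatest (j + 1) (by omega) hj).2 ⟨η, hdeg, rfl⟩
    have hv' : D.μ j < S.v (θ - η) := by simpa using hv
    exact lt_of_lt_of_le hv' hub
  have hmu_lt : ∀ a b, a < b → b ≤ D.r + 1 → D.μ a < D.μ b := by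
    intro a b hab hb
    induction b with
    | zero => omega
    | succ k ih =>
      rcases Nat.lt_succ_iff_lt_or_eq.mp hab with h | h
      · exact (ih h (by omega)).trans (hmu_succ k hb)
      · subst h; exact hmu_succ a hb
  -- m is strictly increasing on [1, r+1]
  have hm_succ : ∀ j, 1 ≤ j → j + 1 ≤ D.r + 1 → D.m j < D.m (j + 1) := by
    intro j h1 hj
    obtain ⟨η, hdeg, hv⟩ := (D.m_isLeast (j + 1) (by omega) hj).1
    have hv' : D.μ j < S.v (θ - η) := by simpa using hv
    have hle : D.m j ≤ D.m (j + 1) := by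
      apply (D.m_isLeast j h1 (by omega)).2
      exact ⟨η, hdeg, (hmu_lt (j - 1) j (by omega) (by omega)).trans hv'⟩
    rcases hle.lt_or_eq with h | h
    · exact h
    · exfalso
      have hub := (D.mu_isGreatest j h1 (by omega)).2 ⟨η, by rw [hdeg, ← h], rfl⟩
      exact hv'.not_ge hub
  have hm_lt : ∀ a b, 1 ≤ a → a < b → b ≤ D.r + 1 → D.m a < D.m b := by
    intro a b h1 hab hb
    induction b with
    | zero => omega
    | succ k ih =>
      rcases Nat.lt_succ_iff_lt_or_eq.mp hab with h | h
      · exact (ih h (by omega)).trans (hm_succ k (by omega) hb)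
      · subst h; exact hm_succ a h1 hb
  intro i h1 hi
  obtain ⟨hdegαi, hvαi, -⟩ := hFr i h1 hi
  have hμlt : D.μ (i - 1) < D.μ i := hmu_lt (i - 1) i (by omega) (by omega)
  have hvαθ : S.v (α i - θ) = D.μ i := by
    rw [show α i - θ = -(θ - α i) by ring, S.v_neg, hvαi]
  -- key ultrametric fact
  have key : ∀ η, S.v (θ - η) < D.μ i → S.v (α i - η) = S.v (θ - η) := by
    intro η h
    rw [show α i - η = (α i - θ) + (θ - η) by ring]
    exact S.v_add_eq (by rw [hvαθ]; exact h)
  -- degrees below m j force small valuation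
  have hlb : ∀ j, 1 ≤ j → j ≤ i → ∀ η : AlgebraicClosure K,
      (minpoly K η).natDegree < D.m j → S.v (θ - η) ≤ D.μ (j - 1) := by
    intro j hj1 hji η hd
    by_contra h
    push_neg at h
    exact absurd ((D.m_isLeast j hj1 (by omega)).2 ⟨η, rfl, h⟩) (not_le.mpr hd)
  have hleast : ∀ j, 1 ≤ j → j ≤ i →
      IsLeast {d : ℕ | ∃ η : AlgebraicClosure K, (minpoly K η).natDegree = d ∧
        (if j - 1 < i then D.μ (j - 1) else ⊤) < S.v (α i - η)} (D.m j) := by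
    intro j hj1 hji
    simp only [if_pos (show j - 1 < i by omega)]
    constructor
    · -- membership
      by_cases hcase : j = i
      · subst hcase
        refine ⟨α j, hdegαi, ?_⟩
        rw [sub_self, S.v_zero]
        exact lt_of_lt_of_le hμlt le_top
      · have hji' : j < i := by omega
        obtain ⟨η, hdeg, hv⟩ := (D.m_isLeast j hj1 (by omega)).1
        have hub : S.v (θ - η) ≤ D.μ j := (D.mu_isGreatest j hj1 (by omega)).2 ⟨η, hdeg, rfl⟩
        have hlt : S.v (θ - η) < D.μ i := lt_of_le_of_lt hub (hmu_lt j i hji' (by omega))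
        exact ⟨η, hdeg, by rw [key η hlt]; exact hv⟩
    · -- lower bound
      rintro d ⟨η, hdeg, hv⟩
      by_contra hlt
      push_neg at hlt
      have hsm : S.v (θ - η) ≤ D.μ (j - 1) := hlb j hj1 hji η (by omega)
      have hlt2 : S.v (θ - η) < D.μ i :=
        lt_of_le_of_lt hsm (hmu_lt (j - 1) i (by omega) (by omega))
      rw [key η hlt2] at hv
      exact hv.not_ge hsm
  have hgreat : ∀ j, 1 ≤ j → j ≤ i →
      IsGreatest {c : WithTop ℚ | ∃ η : AlgebraicClosure K, (minpoly K η).natDegree = D.m j ∧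
        S.v (α i - η) = c} (if j < i then D.μ j else ⊤) := by
    intro j hj1 hji
    by_cases hcase : j = i
    · subst hcase
      simp only [if_neg (lt_irrefl j)]
      exact ⟨⟨α j, hdegαi, by rw [sub_self, S.v_zero]⟩, fun c _ => le_top⟩
    · have hji' : j < i := by omega
      simp only [if_pos hji']
      constructor
      · obtain ⟨η, hdeg, hv⟩ := (D.mu_isGreatest j hj1 (by omega)).1
        have hlt : S.v (θ - η) < D.μ i := by rw [hv]; exact hmu_lt j i hji' (by omega)
        exact ⟨η, hdeg, by rw [key η hlt]; exact hv⟩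
      · rintro c ⟨η, hdeg, rfl⟩
        have hub : S.v (θ - η) ≤ D.μ j := (D.mu_isGreatest j hj1 (by omega)).2 ⟨η, hdeg, rfl⟩
        have hlt : S.v (θ - η) < D.μ i := lt_of_le_of_lt hub (hmu_lt j i hji' (by omega))
        rw [key η hlt]
        exact hub
  refine ⟨{ r := i - 1, m := D.m, μ := fun j => if j < i then D.μ j else ⊤,
            m_zero := D.m_zero
            mu_zero := by simp only [if_pos (show 0 < i by omega)]; exact D.mu_zero
            m_isLeast := fun j hj1 hj2 => hleast j hj1 (by omega)
            mu_isGreatest := fun j hj1 hj2 => hgreat j hj1 (by omega)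
            m_lt_n := fun j hj1 hj2 => hm_lt j i hj1 (by omega) (by omega)
            m_last := by simp only [show i - 1 + 1 = i by omega, if_neg (lt_irrefl i)] },
        Nat.succ_pred_eq_of_pos h1, ?_⟩
  -- IsFrame
  intro j hj1 hj2
  replace hj2 : j ≤ i - 1 := hj2
  obtain ⟨hdj, hvj, hFj⟩ := hFr j hj1 (by omega)
  refine ⟨α j, hdj, ?_, hFj⟩
  have hj2' : j < i := by omega
  simp only [if_pos hj2']
  have hlt : S.v (θ - α j) < D.μ i := by
    rw [hvj]; exact hmu_lt j i hj2' (by omega)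
  rw [key (α j) hlt]
  exact hvj
end
end

section
/- Let F(x) ∈ 𝓞[x] be a monic irreducible polynomial with root θ ∈ K̄, with Okutsu invariants m_i, μ_i and depth r. Fix 1 ≤ i ≤ r+1, and let α, η ∈ K̄ be algebraic integers satisfying v(θ − α) > μ_{i−1} and v(θ − η) > μ_{i−1}. Then, for every nonzero polynomial g(x) ∈ K[x] of degree strictly less than m_i, one has v(g(η) − g(α)) > v(g(α)). -/
open Polynomial

noncomputable section

/-!
A root `β` of `g` with `v(θ - β) > μ_{i-1}` would have degree `< m_i`, contradicting the
minimality of `m_i`. So every root satisfies `v(α - β) = v(θ - β) ≤ μ_{i-1} < v(η - α)`: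
each factor `η - β` of `g(η) = c ∏ (η - β)` agrees with the factor `α - β` of `g(α)` to
higher order than `v(α - β)`, and such approximations multiply.
-/

namespace AddValuation

variable {Γ₀ : Type*} [LinearOrderedAddCommGroupWithTop Γ₀]

section CommRing

variable {R : Type*} [CommRing R] (v : AddValuation R Γ₀)

-- For a unit `b`, `v b < v (a - b)` says that `a / b` is a principal unit.
open LinearOrderedAddCommGroupWithTop in
theorem map_mul_lt_map_mul_sub_mul {a b c d : R} (hab : v b < v (a - b)) (hcd : v d < v (c - d)) :
    v (b * d) < v (a * c - b * d) := by
  have hb : v b ≠ ⊤ := hab.ne_top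
  have hd : v d ≠ ⊤ := hcd.ne_top
  have hcd_eq : v c = v d := v.map_eq_of_lt_sub hcd
  rw [show a * c - b * d = (a - b) * c + b * (c - d) by ring]
  refine v.map_lt_add ?_ ?_
  · rw [v.map_mul, v.map_mul, hcd_eq]
    exact (add_lt_add_iff_left_of_ne_top hd).2 hab
  · rw [v.map_mul, v.map_mul]
    exact (add_lt_add_iff_right_of_ne_top hb).2 hcd

theorem map_prod_lt_map_prod_sub_prod {ι : Type*} (s : Multiset ι) {a b : ι → R}
    (h : ∀ i ∈ s, v (b i) < v (a i - b i)) :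
    v (s.map b).prod < v ((s.map a).prod - (s.map b).prod) := by
  induction s using Multiset.induction_on with
  | empty => simp
  | cons j s ih =>
    simp only [Multiset.map_cons, Multiset.prod_cons]
    exact v.map_mul_lt_map_mul_sub_mul (h j (s.mem_cons_self j))
      (ih fun i hi => h i (Multiset.mem_cons_of_mem hi))

end CommRing

theorem map_eval_lt_map_eval_sub_eval {L : Type*} [Field L] (v : AddValuation L Γ₀) {p : L[X]}
    (hsplit : p.Splits) (hp : p ≠ 0) {α η : L}
    (hroots : ∀ β ∈ p.roots, v (α - β) < v (η - α)) :
    v (p.eval α) < v (p.eval η - p.eval α) := by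
  rw [hsplit.eval_eq_prod_roots, hsplit.eval_eq_prod_roots]
  refine v.map_mul_lt_map_mul_sub_mul ?_ (v.map_prod_lt_map_prod_sub_prod _ fun β hβ => ?_)
  · rwa [sub_self, v.map_zero, lt_top_iff_ne_top, v.ne_top_iff, leadingCoeff_ne_zero]
  · rw [sub_sub_sub_cancel_right]
    exact hroots β hβ

end AddValuation

namespace OkutsuSetup

variable {K : Type} [Field K] [CharZero K] (S : OkutsuSetup K)

def valuation : AddValuation (AlgebraicClosure K) (WithTop ℚ) :=
  AddValuation.of S.v ((S.v_eq_top_iff 0).2 rfl) S.v_one S.v_min_le_add S.v_mul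

@[simp]
theorem valuation_apply (x : AlgebraicClosure K) : S.valuation x = S.v x := rfl

variable {S} in
theorem OkutsuData.v_sub_le_of_aeval_eq_zero {θ : AlgebraicClosure K} {n : ℕ}
    (D : OkutsuData S θ n) {i : ℕ} (hi1 : 1 ≤ i) (hi2 : i ≤ D.r + 1) {g : K[X]}
    (hg : g ≠ 0) (hgdeg : g.natDegree < D.m i) {β : AlgebraicClosure K} (hβ : aeval β g = 0) :
    S.v (θ - β) ≤ D.μ (i - 1) := by
  by_contra! hclose
  have hmin : D.m i ≤ (minpoly K β).natDegree := (D.m_isLeast i hi1 hi2).2 ⟨β, rfl, hclose⟩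
  have hdvd : (minpoly K β).natDegree ≤ g.natDegree :=
    natDegree_le_of_dvd (minpoly.dvd K β hβ) hg
  omega

end OkutsuSetup

open OkutsuSetup in
theorem okutsu_stmt_5_general {K : Type} [Field K] [CharZero K] (S : OkutsuSetup K)
    (n : ℕ)
    (θ : AlgebraicClosure K)
    (D : OkutsuData S θ n)
    (i : ℕ) (hi1 : 1 ≤ i) (hi2 : i ≤ D.r + 1)
    (α η : AlgebraicClosure K)
    (hαv : D.μ (i - 1) < S.v (θ - α)) (hηv : D.μ (i - 1) < S.v (θ - η))
    (g : Polynomial K) (hg : g ≠ 0) (hgdeg : g.natDegree < D.m i) :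
    S.v (Polynomial.aeval α g) <
      S.v (Polynomial.aeval η g - Polynomial.aeval α g) := by
  have hηα : D.μ (i - 1) < S.v (η - α) := by
    rw [← sub_add_sub_cancel η θ α]
    exact S.valuation.map_lt_add (by rwa [S.valuation.map_sub_swap]) hαv
  have hroots : ∀ β ∈ (g.map (algebraMap K (AlgebraicClosure K))).roots,
      S.valuation (α - β) < S.valuation (η - α) := by
    intro β hβ
    have hβg : aeval β g = 0 := by
      simpa [aeval_def, eval_map] using (mem_roots (map_ne_zero hg)).1 hβ
    have hθβ := D.v_sub_le_of_aeval_eq_zero hi1 hi2 hg hgdeg hβg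
    calc S.valuation (α - β) = S.v (θ - β) := by
          rw [← sub_sub_sub_cancel_left β α θ]
          exact S.valuation.map_sub_eq_of_lt_left (hθβ.trans_lt hαv)
      _ < S.v (η - α) := hθβ.trans_lt hηα
  simpa [aeval_def, eval_map] using S.valuation.map_eval_lt_map_eval_sub_eval
    (IsAlgClosed.splits _) (map_ne_zero hg) hroots

open OkutsuSetup in
/-- Let `F ∈ 𝓞[x]` be monic irreducible with root `θ`, with Okutsu
invariants `m_i, μ_i` and depth `r`.  Fix `1 ≤ i ≤ r + 1` and let `α, η ∈ K̄` be
algebraic integers with `v(θ - α) > μ_{i-1}` and `v(θ - η) > μ_{i-1}`.  Then for every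
nonzero `g ∈ K[x]` of degree `< m_i` one has `v(g(η) - g(α)) > v(g(α))`. -/
theorem okutsu_stmt_5 {K : Type} [Field K] [CharZero K] (S : OkutsuSetup K)
    (F : Polynomial S.integers) (hFmonic : F.Monic)
    (hFirr : Irreducible (F.map S.integers.subtype))
    (n : ℕ) (hFdeg : F.natDegree = n)
    (θ : AlgebraicClosure K) (hθ : S.evalK F θ = 0)
    (D : OkutsuData S θ n)
    (i : ℕ) (hi1 : 1 ≤ i) (hi2 : i ≤ D.r + 1)
    (α η : AlgebraicClosure K) (hαint : 0 ≤ S.v α) (hηint : 0 ≤ S.v η)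
    (hαv : D.μ (i - 1) < S.v (θ - α)) (hηv : D.μ (i - 1) < S.v (θ - η))
    (g : Polynomial K) (hg : g ≠ 0) (hgdeg : g.natDegree < D.m i) :
    S.v (Polynomial.aeval α g) <
      S.v (Polynomial.aeval η g - Polynomial.aeval α g) :=
  okutsu_stmt_5_general S n θ D i hi1 hi2 α η hαv hηv g hg hgdeg
end
end
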